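/- Under the hypotheses of the fractional harmonic oscillator (α ∈ (0,1], ξ_d > 0, m > 0, m̃² = m²/ξ_d, φ(t) = A cos(m̃ t^α/α) + B sin(m̃ t^α/α)), the regularized energy Ẽ(t) = ½ ξ_d t^{1-α} (φ'(t))² + ½ t^{α-1} m² φ(t)² − ½ m² (A²+B²) t^{α-1} is constant on (0,∞); in fact Ẽ(t) = 0 for all t > 0. -/

import Mathlib

/-! With `θ(t) = m̃ t^α / α` one has `φ' = m̃ t^(α-1) (B cos θ - A sin θ)`, so by `ξ_d m̃² = m²` the
kinetic term equals `½ m² t^(α-1) (B cos θ - A sin θ)²`; adding the potential term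
`½ m² t^(α-1) (A cos θ + B sin θ)²` gives `½ m² t^(α-1) (A² + B²)`, since a rotation preserves
`A² + B²`. -/

open Real

theorem hasDerivAt_mul_rpow_div_self (c : ℝ) {α t : ℝ} (hα : α ≠ 0) (ht : t ≠ 0) :
    HasDerivAt (fun u : ℝ => c * u ^ α / α) (c * t ^ (α - 1)) t := by
  refine (((hasDerivAt_rpow_const (Or.inl ht)).const_mul c).div_const α).congr_deriv ?_
  field_simp

theorem HasDerivAt.cos_add_sin_comp {f : ℝ → ℝ} {f' t : ℝ} (A B : ℝ) (hf : HasDerivAt f f' t) :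
    HasDerivAt (fun u => A * Real.cos (f u) + B * Real.sin (f u))
      ((B * Real.cos (f t) - A * Real.sin (f t)) * f') t := by
  refine ((hf.cos.const_mul A).add (hf.sin.const_mul B)).congr_deriv ?_
  ring

theorem sq_add_sq_cos_sin_combination (A B θ : ℝ) :
    (B * cos θ - A * sin θ) ^ 2 + (A * cos θ + B * sin θ) ^ 2 = A ^ 2 + B ^ 2 := by
  linear_combination (A ^ 2 + B ^ 2) * cos_sq_add_sin_sq θ

theorem rpow_one_sub_mul_rpow_sub_one_sq {t : ℝ} (ht : 0 < t) (α : ℝ) :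
    t ^ (1 - α) * (t ^ (α - 1)) ^ 2 = t ^ (α - 1) := by
  rw [← rpow_natCast, ← rpow_mul ht.le, ← rpow_add ht]
  ring_nf

theorem fractional_oscillator_regularized_energy_general (α ξd m mt A B : ℝ)
    (hα : α ∈ Set.Ioc (0:ℝ) 1) (hξ : 0 < ξd)
    (hmt : mt ^ 2 = m ^ 2 / ξd) :
    ∀ t : ℝ, 0 < t →
      (1/2) * ξd * t ^ (1 - α) *
          (deriv (fun u => A * Real.cos (mt * u ^ α / α)
            + B * Real.sin (mt * u ^ α / α)) t) ^ 2
        + (1/2) * t ^ (α - 1) * m ^ 2 *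
          (A * Real.cos (mt * t ^ α / α)
            + B * Real.sin (mt * t ^ α / α)) ^ 2
        - (1/2) * m ^ 2 * (A ^ 2 + B ^ 2) * t ^ (α - 1) = 0 := by
  intro t ht
  rw [((hasDerivAt_mul_rpow_div_self mt hα.1.ne' ht.ne').cos_add_sin_comp A B).deriv]
  have hmass : ξd * mt ^ 2 = m ^ 2 := by
    rw [hmt]
    field_simp
  set θ := mt * t ^ α / α
  linear_combination
    (1/2 * ξd * mt ^ 2 * (B * cos θ - A * sin θ) ^ 2) * rpow_one_sub_mul_rpow_sub_one_sq ht α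
    + (1/2 * (B * cos θ - A * sin θ) ^ 2 * t ^ (α - 1)) * hmass
    + (1/2 * m ^ 2 * t ^ (α - 1)) * sq_add_sq_cos_sin_combination A B θ

/-- The regularized energy of the fractional harmonic oscillator vanishes
identically on `(0, ∞)`. -/
theorem fractional_oscillator_regularized_energy (α ξd m mt A B : ℝ)
    (hα : α ∈ Set.Ioc (0:ℝ) 1) (hξ : 0 < ξd) (hm : 0 < m)
    (hmt : mt ^ 2 = m ^ 2 / ξd) :
    ∀ t : ℝ, 0 < t →
      (1/2) * ξd * t ^ (1 - α) *
          (deriv (fun u => A * Real.cos (mt * u ^ α / α)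
            + B * Real.sin (mt * u ^ α / α)) t) ^ 2
        + (1/2) * t ^ (α - 1) * m ^ 2 *
          (A * Real.cos (mt * t ^ α / α)
            + B * Real.sin (mt * t ^ α / α)) ^ 2
        - (1/2) * m ^ 2 * (A ^ 2 + B ^ 2) * t ^ (α - 1) = 0 :=
  fractional_oscillator_regularized_energy_general α ξd m mt A B hα hξ hmt
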